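/- arXiv:2105.02146 — 3 statements merged into one kernel-verified Lean document; each statement's English description precedes it below -/
import Mathlib

section
/- Let F > 0, k > 0, d, t be reals with 2d + t − k > 0, and let S ≥ 0 and S_w ≥ 0 be reals (so that 2d + 2S + t − k > 0). Then F(2(d + S_w) + t − 1)/(k(2(d + S) + t − k)) ≤ F(2d + t − 1)/(k(2d + t − k)) if and only if S_w ≤ ((2d + t − 1)/(2d + t − k))·S. In words: using the base stations reduces the BS-MBCCR repair bandwidth cost below the cost of purely local repair exactly when the weighted base-station download Σ_l w_l r_l is at most w̄ times the unweighted download Σ_l r_l, where w̄ = (2d + t − 1)/(2d + t − k). -/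
theorem add_div_add_le_div_iff {α : Type*} [Field α] [LinearOrder α] [IsStrictOrderedRing α]
    {a b x y : α} (hb : 0 < b) (hby : 0 < b + y) :
    (a + x) / (b + y) ≤ a / b ↔ x ≤ a / b * y := by
  rw [div_le_div_iff₀ hby hb, div_mul_eq_mul_div, le_div_iff₀ hb]
  rw [add_mul, mul_add, mul_comm a b, add_le_add_iff_left]

theorem bs_mbccr_threshold_iff_general
    (F k d t S Sw : ℝ) (hF : 0 < F) (hk : 0 < k)
    (hpos : 0 < 2 * d + t - k) (hS : 0 ≤ S) :
    F * (2 * (d + Sw) + t - 1) / (k * (2 * (d + S) + t - k))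
        ≤ F * (2 * d + t - 1) / (k * (2 * d + t - k))
      ↔ Sw ≤ ((2 * d + t - 1) / (2 * d + t - k)) * S := by
  have hnum : 2 * (d + Sw) + t - 1 = (2 * d + t - 1) + 2 * Sw := by ring
  have hden : 2 * (d + S) + t - k = (2 * d + t - k) + 2 * S := by ring
  rw [mul_div_mul_comm, mul_div_mul_comm, mul_le_mul_iff_right₀ (div_pos hF hk), hnum, hden,
    add_div_add_le_div_iff hpos (by linarith), mul_left_comm, mul_le_mul_iff_right₀ two_pos]

/-- Inequality (16): using the base stations reduces the BS-MBCCR repair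
bandwidth cost below the purely-local cost iff S_w ≤ w̄·S with
w̄ = (2d+t−1)/(2d+t−k). -/
theorem bs_mbccr_threshold_iff
    (F k d t S Sw : ℝ) (hF : 0 < F) (hk : 0 < k)
    (hpos : 0 < 2 * d + t - k) (hS : 0 ≤ S) (hSw : 0 ≤ Sw) :
    F * (2 * (d + Sw) + t - 1) / (k * (2 * (d + S) + t - k))
        ≤ F * (2 * d + t - 1) / (k * (2 * d + t - k))
      ↔ Sw ≤ ((2 * d + t - 1) / (2 * d + t - k)) * S :=
  bs_mbccr_threshold_iff_general F k d t S Sw hF hk hpos hS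
end

section
/- (Correctness of one step of Algorithm 1, BS-MBCCR case.) Let F > 0, k > 0, t be reals, let d̄ and b̄ be reals with 2b̄ + t − k > 0, and let w_i ≥ 0 and b_i > 0 be reals. Then F(2(d̄ + w_i b_i) + t − 1)/(k(2(b̄ + b_i) + t − k)) ≤ F(2d̄ + t − 1)/(k(2b̄ + t − k)) if and only if w_i ≤ (2d̄ + t − 1)/(2b̄ + t − k). Hence, including base station i (at its full link capacity b_i) does not increase the BS-MBCCR repair bandwidth cost exactly when its cost w_i does not exceed the threshold w̄_t = (2d̄ + t − 1)/(2b̄ + t − k). -/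
/-!
Writing A = 2d̄ + t − 1 and B = 2b̄ + t − k, the new cost is (F/k) · (A + 2wᵢbᵢ)/(B + 2bᵢ), a mediant
of the old ratio A/B and wᵢ = 2wᵢbᵢ/2bᵢ. A mediant lies on the same side of A/B as wᵢ, so it does not
exceed A/B exactly when wᵢ ≤ A/B.
-/

theorem add_mul_div_add_le_div_iff {α : Type*} [Field α] [LinearOrder α] [IsStrictOrderedRing α]
    {a b w c : α} (hb : 0 < b) (hc : 0 < c) :
    (a + w * c) / (b + c) ≤ a / b ↔ w ≤ a / b := by
  rw [div_le_div_iff₀ (add_pos hb hc) hb, le_div_iff₀ hb]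
  calc (a + w * c) * b ≤ a * (b + c) ↔ c * (w * b) ≤ c * a := by
        constructor <;> intro h <;> linarith
    _ ↔ w * b ≤ a := mul_le_mul_iff_right₀ hc

theorem algorithm1_step_mbccr_general
    (F k t dbar bbar wi bi : ℝ) (hF : 0 < F) (hk : 0 < k)
    (hpos : 0 < 2 * bbar + t - k) (hbi : 0 < bi) :
    F * (2 * (dbar + wi * bi) + t - 1) / (k * (2 * (bbar + bi) + t - k))
        ≤ F * (2 * dbar + t - 1) / (k * (2 * bbar + t - k))
      ↔ wi ≤ (2 * dbar + t - 1) / (2 * bbar + t - k) := by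
  have hnum : 2 * (dbar + wi * bi) + t - 1 = (2 * dbar + t - 1) + wi * (2 * bi) := by ring
  have hden : 2 * (bbar + bi) + t - k = (2 * bbar + t - k) + 2 * bi := by ring
  rw [hnum, hden, mul_div_mul_comm, mul_div_mul_comm, mul_le_mul_iff_right₀ (div_pos hF hk)]
  exact add_mul_div_add_le_div_iff hpos (by positivity)

/-- Correctness of one step of Algorithm 1, BS-MBCCR case: adding base
station i at full capacity bᵢ does not increase the BS-MBCCR cost iff
wᵢ ≤ (2d̄ + t − 1)/(2b̄ + t − k). -/
theorem algorithm1_step_mbccr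
    (F k t dbar bbar wi bi : ℝ) (hF : 0 < F) (hk : 0 < k)
    (hpos : 0 < 2 * bbar + t - k) (hwi : 0 ≤ wi) (hbi : 0 < bi) :
    F * (2 * (dbar + wi * bi) + t - 1) / (k * (2 * (bbar + bi) + t - k))
        ≤ F * (2 * dbar + t - 1) / (k * (2 * bbar + t - k))
      ↔ wi ≤ (2 * dbar + t - 1) / (2 * bbar + t - k) :=
  algorithm1_step_mbccr_general F k t dbar bbar wi bi hF hk hpos hbi
end

section
/- (Feasibility of the BS-MSCR point.) Let F > 0 be real, let k ≥ 1 and t ≥ 1 be integers, let d′ be a real with d′ + t − k > 0, and set α = F/k and β = β′ = F/(k(d′ + t − k)). Then for every integer g with 0 ≤ g ≤ k, the file-size constraint F ≤ α(k − g) + gβ(d′ − k + g/2) + β′gt + ψ_{g,t}·(β/2 − β′) holds, where ψ_{g,t} = ⌊g/t⌋t² + (g − ⌊g/t⌋t)². Moreover, it holds with equality whenever g ≤ t. -/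
/-!
After substituting α = F/k and β = β′ = F/(kD) with D = d′ + t − k, the right-hand side of the
cut-set bound collapses to F + F(g² − ψ_{g,t})/(2kD). Writing g = qt + r, one has
ψ_{g,t} = qt² + r² ≤ (qt + r)² = g², with equality when q = 0 or g = t.
-/

/-- The paper's ψ_{g,t}. -/
def psi (g t : ℕ) : ℕ := g / t * t ^ 2 + (g % t) ^ 2

theorem psi_le_sq (g t : ℕ) : psi g t ≤ g ^ 2 := by
  have hq : g / t ≤ (g / t) ^ 2 := Nat.le_self_pow two_ne_zero _
  calc psi g t ≤ (t * (g / t)) ^ 2 + (g % t) ^ 2 := by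
        unfold psi
        rw [mul_pow, mul_comm (t ^ 2)]
        gcongr
    _ ≤ (t * (g / t) + g % t) ^ 2 := by rw [add_sq]; omega
    _ = g ^ 2 := by rw [Nat.div_add_mod]

theorem psi_eq_sq_of_le {g t : ℕ} (h : g ≤ t) : psi g t = g ^ 2 := by
  rcases h.lt_or_eq with h | rfl
  · simp [psi, Nat.div_eq_of_lt h, Nat.mod_eq_of_lt h]
  · rcases g.eq_zero_or_pos with rfl | hg
    · simp [psi]
    · simp [psi, Nat.div_self hg]

theorem mscr_cut_value_eq (F k t d' g ψ : ℝ) (hk : k ≠ 0) (hD : d' + t - k ≠ 0) :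
    F / k * (k - g) + g * (F / (k * (d' + t - k))) * (d' - k + g / 2)
      + F / (k * (d' + t - k)) * g * t
      + ψ * (F / (k * (d' + t - k)) / 2 - F / (k * (d' + t - k)))
      = F + F * (g ^ 2 - ψ) / (2 * k * (d' + t - k)) := by
  field_simp
  ring

theorem bs_mscr_feasibility_general
    (F : ℝ) (hF : 0 < F) (k t : ℕ) (hk : 1 ≤ k)
    (d' : ℝ) (hpos : 0 < d' + t - k)
    (α β β' : ℝ)
    (hα : α = F / k)
    (hβ : β = F / (k * (d' + t - k)))
    (hβ' : β' = F / (k * (d' + t - k))) :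
    ∀ g : ℕ, g ≤ k →
      (F ≤ α * (k - g) + g * β * (d' - k + g / 2) + β' * g * t
            + ((g / t) * t ^ 2 + (g - t * (g / t)) ^ 2 : ℕ) * (β / 2 - β')) ∧
      (g ≤ t →
        F = α * (k - g) + g * β * (d' - k + g / 2) + β' * g * t
            + ((g / t) * t ^ 2 + (g - t * (g / t)) ^ 2 : ℕ) * (β / 2 - β')) := by
  intro g _
  subst hα hβ hβ'
  have hk0 : (k : ℝ) ≠ 0 := by positivity
  rw [← Nat.mod_def, show g / t * t ^ 2 + (g % t) ^ 2 = psi g t from rfl,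
    mscr_cut_value_eq F k t d' g _ hk0 hpos.ne']
  refine ⟨le_add_of_nonneg_right ?_, fun hgt => ?_⟩
  · have hψ : (psi g t : ℝ) ≤ (g : ℝ) ^ 2 := by exact_mod_cast psi_le_sq g t
    exact div_nonneg (mul_nonneg hF.le (sub_nonneg.mpr hψ)) (by positivity)
  · rw [psi_eq_sq_of_le hgt]
    push_cast
    simp

/-- Feasibility of the BS-MSCR point: with α = F/k and
β = β′ = F/(k(d′ + t − k)), the file-size constraint
F ≤ α(k − g) + gβ(d′ − k + g/2) + β′gt + ψ_{g,t}(β/2 − β′)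
holds for every 0 ≤ g ≤ k, with equality whenever g ≤ t. -/
theorem bs_mscr_feasibility
    (F : ℝ) (hF : 0 < F) (k t : ℕ) (hk : 1 ≤ k) (ht : 1 ≤ t)
    (d' : ℝ) (hpos : 0 < d' + t - k)
    (α β β' : ℝ)
    (hα : α = F / k)
    (hβ : β = F / (k * (d' + t - k)))
    (hβ' : β' = F / (k * (d' + t - k))) :
    ∀ g : ℕ, g ≤ k →
      (F ≤ α * (k - g) + g * β * (d' - k + g / 2) + β' * g * t
            + ((g / t) * t ^ 2 + (g - t * (g / t)) ^ 2 : ℕ) * (β / 2 - β')) ∧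
      (g ≤ t →
        F = α * (k - g) + g * β * (d' - k + g / 2) + β' * g * t
            + ((g / t) * t ^ 2 + (g - t * (g / t)) ^ 2 : ℕ) * (β / 2 - β')) :=
  bs_mscr_feasibility_general F hF k t hk d' hpos α β β' hα hβ hβ'
end
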